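/- arXiv:2101.09800 — 3 statements merged into one kernel-verified Lean document; each statement's English description precedes it below -/
import Mathlib

section
/- As vector spaces, gl(n|n) decomposes as the direct sum gl(n|n) = p_n ⊕ b_n, where p_n is the periplectic Lie superalgebra and b_n is the butterfly subalgebra. -/
open Matrix BigOperators

/-- Index set {±1,...,±n}: `Sum.inl k` represents the negative index −(k+1) (odd),
`Sum.inr k` represents the positive index k+1 (even). -/
abbrev Idx (n : ℕ) := Fin n ⊕ Fin n

/-- parity: 1 for negative (odd) indices, 0 for positive (even) indices -/
def par {n : ℕ} : Idx n → ℕ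
  | Sum.inl _ => 1
  | Sum.inr _ => 0

/-- negation i ↦ −i -/
def ng {n : ℕ} : Idx n → Idx n := Sum.swap

/-- absolute value -/
def ab {n : ℕ} : Idx n → ℕ
  | Sum.inl k => (k : ℕ) + 1
  | Sum.inr k => (k : ℕ) + 1

def ppos {n : ℕ} (k : Fin n) : Idx n := Sum.inr k
def nneg {n : ℕ} (k : Fin n) : Idx n := Sum.inl k

/-- gl(n|n) as matrices indexed by {±1,...,±n} -/
abbrev gl (R : Type) [CommRing R] (n : ℕ) := Matrix (Idx n) (Idx n) R

variable (R : Type) [CommRing R] {n : ℕ}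

/-- elementary matrix E_ij -/
def E (i j : Idx n) : gl R n := Matrix.single i j 1

/-- 𝖤_ij = E_ij − (−1)^{p(i)(p(j)+1)} E_{−j,−i} -/
def Em (i j : Idx n) : gl R n :=
  E R i j - ((-1 : R) ^ (par i * (par j + 1))) • E R (ng j) (ng i)

/-- projection onto the parity-d component -/
def proj (d : ℕ) (X : gl R n) : gl R n :=
  fun i j => if (par i + par j) % 2 = d % 2 then X i j else 0

/-- the super bracket, extended bilinearly from homogeneous components:
[X,Y] = XY − (−1)^{|X||Y|} YX on homogeneous elements -/
def sbr (X Y : gl R n) : gl R n :=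
  X * Y - (proj R 0 Y * proj R 0 X + proj R 0 Y * proj R 1 X
    + proj R 1 Y * proj R 0 X - proj R 1 Y * proj R 1 X)

/-- the involution ι(X) = −π(X^st) -/
def iota (X : gl R n) : gl R n :=
  fun a b => -((-1 : R) ^ (par (ng b) * (par (ng a) + 1))) * X (ng b) (ng a)

/-- X is homogeneous of parity d -/
def IsHom (d : ℕ) (X : gl R n) : Prop :=
  ∀ i j, (par i + par j) % 2 ≠ d % 2 → X i j = 0

/-- supertrace -/
def Str (X : gl R n) : R := ∑ i, ((-1 : R) ^ (par i)) * X i i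

/-- supertrace form B(X,Y) = Str(XY) -/
def BF (X Y : gl R n) : R := Str R (X * Y)

/-- generators of the butterfly subalgebra b_n -/
def bGen (n : ℕ) : Set (gl R n) :=
  {M | (∃ i j : Idx n, ab i < ab j ∧ M = E R i j) ∨
       (∃ k : Fin n, M = E R (ppos k) (ppos k) + E R (nneg k) (nneg k)) ∨
       (∃ k : Fin n, M = E R (ppos k) (nneg k))}

/-- operators on the super tensor square -/
abbrev M2 (R : Type) [CommRing R] (n : ℕ) := Matrix (Idx n × Idx n) (Idx n × Idx n) R
/-- operators on the super tensor cube -/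
abbrev M3 (R : Type) [CommRing R] (n : ℕ) :=
  Matrix (Idx n × Idx n × Idx n) (Idx n × Idx n × Idx n) R

/-- super (Koszul-signed) tensor product A ⊗ B of matrices as an operator on V ⊗ V:
(A⊗B)(e_c ⊗ e_d) = (−1)^{|B| p(c)} A e_c ⊗ B e_d -/
def kron2 (A B : gl R n) : M2 R n :=
  fun x y => ((-1 : R) ^ ((par x.2 + par y.2) * par y.1)) * A x.1 y.1 * B x.2 y.2

/-- M acting on factors 1,2 of the super tensor cube -/
def lift12 (M : M2 R n) : M3 R n :=
  fun x y => if x.2.2 = y.2.2 then M (x.1, x.2.1) (y.1, y.2.1) else 0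

/-- M acting on factors 1,3 of the super tensor cube (with Koszul signs) -/
def lift13 (M : M2 R n) : M3 R n :=
  fun x y => if x.2.1 = y.2.1 then
    ((-1 : R) ^ ((par x.2.2 + par y.2.2) * par x.2.1)) * M (x.1, x.2.2) (y.1, y.2.2) else 0

/-- M acting on factors 2,3 of the super tensor cube (with Koszul signs) -/
def lift23 (M : M2 R n) : M3 R n :=
  fun x y => if x.1 = y.1 then
    ((-1 : R) ^ ((par x.2.1 + par y.2.1 + par x.2.2 + par y.2.2) * par x.1)) * M x.2 y.2 else 0

noncomputable section


/-! `iota` pairs the entry `(a, b)` with `(-b, -a)`. Weight the entries of `X - iota X` by `1`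
strictly above the block diagonal of `|·|`, by `1/2` on it and by `0` below, and call the result
`Q`. Paired entries carry weights adding up to `1`, so `Q - iota Q = X - iota X`, i.e.
`X - Q ∈ p_n`. On each block `{±k}` the shape of `Q` is that of `b_n`, so `Q ∈ b_n`.
Finally `X ↦ Q` is the identity on `b_n` and vanishes on `p_n`, whence `p_n ∩ b_n = 0`. -/

namespace Periplectic

variable {R}

@[simp] lemma ng_inl (k : Fin n) : ng (Sum.inl k) = Sum.inr k := rfl
@[simp] lemma ng_inr (k : Fin n) : ng (Sum.inr k) = Sum.inl k := rfl
@[simp] lemma par_inl (k : Fin n) : par (Sum.inl k : Idx n) = 1 := rfl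
@[simp] lemma par_inr (k : Fin n) : par (Sum.inr k : Idx n) = 0 := rfl
@[simp] lemma ab_inl (k : Fin n) : ab (Sum.inl k : Idx n) = k + 1 := rfl
@[simp] lemma ab_inr (k : Fin n) : ab (Sum.inr k : Idx n) = k + 1 := rfl

@[simp] lemma ng_ng (a : Idx n) : ng (ng a) = a := Sum.swap_swap a

@[simp] lemma ab_ng (a : Idx n) : ab (ng a) = ab a := by cases a <;> rfl

lemma ab_eq_ab_iff {a b : Idx n} : ab a = ab b ↔ b = a ∨ b = ng a := by
  cases a <;> cases b <;> simp [Fin.val_inj, eq_comm]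

def iotaSign (a b : Idx n) : R := -(-1) ^ (par (ng b) * (par (ng a) + 1))

lemma iota_apply (X : gl R n) (a b : Idx n) :
    iota R X a b = iotaSign a b * X (ng b) (ng a) := rfl

lemma iotaSign_mul_iotaSign_ng (a b : Idx n) :
    iotaSign (R := R) a b * iotaSign (ng b) (ng a) = 1 := by
  cases a <;> cases b <;> norm_num [iotaSign]

variable (R n) in
/-- `b_n` by equations: on the block of `±k` the shape `[[c, d], [0, c]]`, rows and columns
ordered `+k, -k`. -/
def butterfly : Submodule R (gl R n) where
  carrier := {M | (∀ a b, ab b < ab a → M a b = 0) ∧ (∀ k, M (Sum.inl k) (Sum.inr k) = 0) ∧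
    ∀ k, M (Sum.inr k) (Sum.inr k) = M (Sum.inl k) (Sum.inl k)}
  add_mem' := by
    rintro M N ⟨hM₁, hM₂, hM₃⟩ ⟨hN₁, hN₂, hN₃⟩
    exact ⟨fun a b h => by simp [hM₁ a b h, hN₁ a b h], fun k => by simp [hM₂, hN₂],
      fun k => by simp [hM₃, hN₃]⟩
  zero_mem' := ⟨fun _ _ _ => rfl, fun _ => rfl, fun _ => rfl⟩
  smul_mem' := by
    rintro c M ⟨hM₁, hM₂, hM₃⟩
    exact ⟨fun a b h => by simp [hM₁ a b h], fun k => by simp [hM₂], fun k => by simp [hM₃]⟩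

lemma bGen_subset_butterfly : bGen R n ⊆ butterfly R n := by
  rintro M (⟨i, j, hij, rfl⟩ | ⟨k, rfl⟩ | ⟨k, rfl⟩) <;>
    refine ⟨fun a b h => ?_, fun l => ?_, fun l => ?_⟩ <;>
    simp only [E, ppos, nneg, Matrix.add_apply, Matrix.single_apply] <;>
    grind [ab_inl, ab_inr]

lemma mem_span_bGen_of_upper {M : gl R n} (hM : ∀ a b, ¬ ab a < ab b → M a b = 0) :
    M ∈ Submodule.span R (bGen R n) := by
  rw [M.matrix_eq_sum_single]
  refine Submodule.sum_mem _ fun a _ => Submodule.sum_mem _ fun b _ => ?_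
  by_cases h : ab a < ab b
  · rw [← mul_one (M a b), ← smul_eq_mul, ← Matrix.smul_single]
    exact Submodule.smul_mem _ _ (Submodule.subset_span (Or.inl ⟨a, b, h, rfl⟩))
  · simp [hM a b h]

lemma butterfly_le_span_bGen : butterfly R n ≤ Submodule.span R (bGen R n) := by
  rintro M ⟨hM₁, hM₂, hM₃⟩
  set D : gl R n := ∑ k, (M (Sum.inr k) (Sum.inl k) • E R (ppos k) (nneg k) +
    M (Sum.inr k) (Sum.inr k) • (E R (ppos k) (ppos k) + E R (nneg k) (nneg k)))
  have hD : D ∈ Submodule.span R (bGen R n) :=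
    Submodule.sum_mem _ fun k _ => Submodule.add_mem _
      (Submodule.smul_mem _ _ (Submodule.subset_span (Or.inr (Or.inr ⟨k, rfl⟩))))
      (Submodule.smul_mem _ _ (Submodule.subset_span (Or.inr (Or.inl ⟨k, rfl⟩))))
  have hupper : ∀ a b, ¬ ab a < ab b → (M - D) a b = 0 := by
    intro a b h
    simp only [D, Matrix.sub_apply, Matrix.sum_apply, Matrix.add_apply, Matrix.smul_apply, E,
      ppos, nneg, Matrix.single_apply, smul_eq_mul]
    rcases lt_or_eq_of_le (not_lt.mp h) with h | h
    · rw [hM₁ a b h, zero_sub, neg_eq_zero]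
      refine Finset.sum_eq_zero fun k _ => ?_
      grind [ab_inl, ab_inr]
    · obtain rfl | rfl := ab_eq_ab_iff.mp h.symm
      · cases b <;> simp [hM₃]
      · cases a <;> simp [hM₂]
  simpa using Submodule.add_mem _ (mem_span_bGen_of_upper hupper) hD

lemma span_bGen_eq_butterfly : Submodule.span R (bGen R n) = butterfly R n :=
  le_antisymm (Submodule.span_le.mpr bGen_subset_butterfly) butterfly_le_span_bGen

variable [Invertible (2 : R)]

def butterflyWeight (a b : Idx n) : R :=
  if ab a < ab b then 1 else if ab a = ab b then ⅟2 else 0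

lemma butterflyWeight_add_ng (a b : Idx n) :
    butterflyWeight (R := R) a b + butterflyWeight (ng b) (ng a) = 1 := by
  simp only [butterflyWeight, ab_ng]
  rcases lt_trichotomy (ab a) (ab b) with h | h | h
  · simp [h, h.not_gt, h.ne']
  · simp [h, invOf_two_add_invOf_two]
  · simp [h, h.not_gt, h.ne']

def toButterfly (X : gl R n) : gl R n :=
  Matrix.of fun a b => butterflyWeight a b * (X - iota R X) a b

lemma iota_sub_toButterfly (X : gl R n) :
    iota R (X - toButterfly X) = X - toButterfly X := by
  ext a b
  have hw := butterflyWeight_add_ng (R := R) a b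
  have hs := iotaSign_mul_iotaSign_ng (R := R) a b
  simp only [toButterfly, iota_apply, Matrix.sub_apply, Matrix.of_apply, ng_ng]
  linear_combination (X a b - iotaSign a b * X (ng b) (ng a)) * hw
    + butterflyWeight (ng b) (ng a) * X a b * hs

lemma toButterfly_mem (X : gl R n) : toButterfly X ∈ butterfly R n := by
  refine ⟨fun a b h => ?_, fun k => ?_, fun k => ?_⟩
  · simp [toButterfly, butterflyWeight, h.not_gt, h.ne']
  · simp [toButterfly, iota_apply, iotaSign]
  · simp [toButterfly, iota_apply, iotaSign, butterflyWeight, add_comm]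

lemma toButterfly_eq_zero_of_iota_eq_self {X : gl R n} (hX : iota R X = X) :
    toButterfly X = 0 := by
  ext a b
  simp [toButterfly, hX]

lemma toButterfly_eq_self_of_mem {X : gl R n} (hX : X ∈ butterfly R n) : toButterfly X = X := by
  obtain ⟨hX₁, hX₂, hX₃⟩ := hX
  ext a b
  simp only [toButterfly, butterflyWeight, Matrix.of_apply, Matrix.sub_apply, iota_apply]
  rcases lt_trichotomy (ab a) (ab b) with h | h | h
  · rw [if_pos h, hX₁ (ng b) (ng a) (by simpa using h)]; ring
  · obtain rfl | rfl := ab_eq_ab_iff.mp h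
    · cases b <;> simp [iotaSign, hX₃, ← two_mul]
    · cases a <;> simp [iotaSign, hX₂, ← two_mul]
  · simp [h.not_gt, h.ne', hX₁ a b h]

end Periplectic

open Periplectic

/-- gl(n|n) = p_n ⊕ b_n as vector spaces. -/
theorem gl_direct_sum_pn_bn (n : ℕ) :
    (∀ X : gl ℂ n, ∃ P Q : gl ℂ n,
      iota ℂ P = P ∧ Q ∈ Submodule.span ℂ (bGen ℂ n) ∧ X = P + Q) ∧
    (∀ X : gl ℂ n, iota ℂ X = X → X ∈ Submodule.span ℂ (bGen ℂ n) → X = 0) := by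
  simp only [span_bGen_eq_butterfly]
  refine ⟨fun X => ⟨X - toButterfly X, toButterfly X, iota_sub_toButterfly X,
    toButterfly_mem X, (sub_add_cancel X _).symm⟩, fun X hfix hmem => ?_⟩
  rw [← toButterfly_eq_self_of_mem hmem, toButterfly_eq_zero_of_iota_eq_self hfix]
end
end

section
/- Let p be a finite-dimensional Lie superalgebra with a supersymmetric, invariant, non-degenerate bilinear form B, and let p_1, p_2 be isotropic Lie subsuperalgebras with p = p_1 ⊕ p_2 (a Manin supertriple). If {X_i} is a basis of p_1 and {X'_i} is the dual basis of p_2 (B(X'_i, X_j) = δ_ij), then s = Σ_i X_i ⊗ X'_i satisfies the classical Yang–Baxter equation [s_12, s_13] + [s_12, s_23] + [s_13, s_23] = 0 in U(p)^{⊗3}. -/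
/-!
The functionals `B (X' k) ·` and `(-1) ^ d k • B (X k) ·` are the coordinates for the basis
`{Xᵢ} ∪ {X'ᵢ}` of `p`, so the identity can be checked coefficientwise in the induced basis of
`p ⊗ p ⊗ p`. Since `p₁` and `p₂` are isotropic subalgebras, only the coefficients of
`X_a ⊗ X'_b ⊗ X'_c` and `X_a ⊗ X_b ⊗ X'_c` survive, and each is a sum of two values of `B` on
brackets which invariance and supersymmetry identify up to sign. Either the parities of the
degrees match, and the Koszul signs cancel the two terms, or they do not, and both terms vanish
because `B` is even.
-/

open scoped TensorProduct BigOperators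

noncomputable section

/-- membership in the even (`a % 2 = 0`) or odd part of a ℤ/2-graded space -/
def Hm {p : Type} [AddCommGroup p] [Module ℂ p] (p0 p1 : Submodule ℂ p) (a : ℕ) (x : p) :
    Prop :=
  x ∈ if a % 2 = 0 then p0 else p1

theorem Module.DualBases.of_span_eq_top {R M κ : Type*} [CommSemiring R] [AddCommMonoid M]
    [Module R M] [Fintype κ] [DecidableEq κ] {e : κ → M} {ε : κ → Module.Dual R M}
    (hε : ∀ i j, ε i (e j) = if i = j then 1 else 0)
    (hspan : Submodule.span R (Set.range e) = ⊤) : Module.DualBases e ε := by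
  have hsum : ∀ m, ∑ i, ε i m • e i = m := by
    intro m
    obtain ⟨c, rfl⟩ :=
      (Submodule.mem_span_range_iff_exists_fun R).1 (hspan ▸ Submodule.mem_top (x := m))
    simp [hε]
  refine ⟨fun i => by simp [hε], fun i j hij => by simp [hε, hij], fun {m₁ m₂} h => ?_,
    fun m => Set.toFinite _⟩
  rw [← hsum m₁, ← hsum m₂]
  simp only [h]

section DualCoord

variable {R M ι : Type*} [CommRing R] [AddCommGroup M] [Module R M]

/-- The sign compensates the supersymmetry `B (X k) (X' k) = (-1) ^ d k`. -/
def dualCoord (B : M →ₗ[R] M →ₗ[R] R) (X X' : ι → M) (d : ι → ℕ) : ι ⊕ ι → Module.Dual R M :=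
  Sum.elim (fun k => B (X' k)) (fun k => (-1 : R) ^ d k • B (X k))

variable {B : M →ₗ[R] M →ₗ[R] R} {X X' : ι → M} {d : ι → ℕ}

@[simp]
theorem dualCoord_inl (k : ι) (u : M) : dualCoord B X X' d (Sum.inl k) u = B (X' k) u :=
  rfl

@[simp]
theorem dualCoord_inr (k : ι) (u : M) :
    dualCoord B X X' d (Sum.inr k) u = (-1 : R) ^ d k * B (X k) u :=
  rfl

end DualCoord

section SuperForm

variable {p : Type} [AddCommGroup p] [Module ℂ p] {p0 p1 : Submodule ℂ p}
  {br : p →ₗ[ℂ] p →ₗ[ℂ] p} {B : p →ₗ[ℂ] p →ₗ[ℂ] ℂ}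
  (hbrgr : ∀ (a b : ℕ) (x y : p), Hm p0 p1 a x → Hm p0 p1 b y → Hm p0 p1 (a + b) (br x y))
  (hanti : ∀ (a b : ℕ) (x y : p), Hm p0 p1 a x → Hm p0 p1 b y →
    br x y = -(((-1 : ℂ) ^ (a * b)) • br y x))
  (hBsym : ∀ (a b : ℕ) (x y : p), Hm p0 p1 a x → Hm p0 p1 b y →
    B x y = ((-1 : ℂ) ^ (a * b)) * B y x)
  (hBeven : ∀ x ∈ p0, ∀ y ∈ p1, B x y = 0)
  (hBinv : ∀ x y z : p, B (br x y) z = B x (br y z))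
  {a b c : ℕ} {x y z : p}

include hBsym hBeven in
theorem form_eq_zero_of_parity_ne (hx : Hm p0 p1 a x) (hy : Hm p0 p1 b y)
    (hab : ¬(Even a ↔ Even b)) : B x y = 0 := by
  have hx' := hx
  have hy' := hy
  simp only [Hm, ← Nat.even_iff] at hx' hy'
  by_cases ha : Even a <;> by_cases hb : Even b <;>
    simp only [ha, hb, if_true, if_false, iff_true, iff_false, not_true_eq_false,
      not_false_eq_true] at hx' hy' hab
  · exact hBeven x hx' y hy'
  · rw [hBsym a b x y hx hy, hBeven y hy' x hx', mul_zero]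

include hbrgr hBsym hBeven hBinv in
theorem form_bracket_eq_zero_of_parity_ne (hx : Hm p0 p1 a x) (hy : Hm p0 p1 b y)
    (hz : Hm p0 p1 c z) (habc : ¬(Even (a + b) ↔ Even c)) : B x (br y z) = 0 := by
  rw [← hBinv]
  exact form_eq_zero_of_parity_ne hBsym hBeven (hbrgr a b x y hx hy) hz habc

include hanti hBinv in
theorem form_bracket_swap (hx : Hm p0 p1 a x) (hy : Hm p0 p1 b y) (z : p) :
    B y (br x z) = -((-1 : ℂ) ^ (a * b) * B x (br y z)) := by
  rw [← hBinv, hanti b a y x hy hx]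
  simp only [map_neg, map_smul, LinearMap.neg_apply, LinearMap.smul_apply, smul_eq_mul, hBinv,
    mul_comm b a]

include hbrgr hBsym hBinv in
theorem form_bracket_cyclic (hx : Hm p0 p1 a x) (hy : Hm p0 p1 b y) (hz : Hm p0 p1 c z) :
    B z (br x y) = (-1 : ℂ) ^ (c * (a + b)) * B x (br y z) := by
  rw [hBsym c (a + b) z _ hz (hbrgr a b x y hx hy), hBinv]

include hbrgr hanti hBsym hBeven hBinv in
theorem form_bracket_add_swap_eq_zero (hx : Hm p0 p1 a x) (hy : Hm p0 p1 b y)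
    (hz : Hm p0 p1 c z) :
    (-1 : ℂ) ^ (b * c) * B x (br y z) + (-1 : ℂ) ^ b * B y (br x z) = 0 := by
  rw [form_bracket_swap hanti hBinv hx hy]
  by_cases habc : Even (a + b) ↔ Even c
  · have hsign : (-1 : ℂ) ^ (b * c) = (-1) ^ (b + a * b) :=
      neg_one_pow_congr (by simp only [Nat.even_add, Nat.even_mul] at habc ⊢; tauto)
    rw [hsign, pow_add]
    ring
  · rw [form_bracket_eq_zero_of_parity_ne hbrgr hBsym hBeven hBinv hx hy hz habc]
    ring

include hbrgr hanti hBsym hBeven hBinv in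
theorem form_bracket_swap_add_cyclic_eq_zero (hx : Hm p0 p1 a x) (hy : Hm p0 p1 b y)
    (hz : Hm p0 p1 c z) :
    B y (br x z) + (-1 : ℂ) ^ (a * b) * ((-1 : ℂ) ^ c * B z (br x y)) = 0 := by
  rw [form_bracket_swap hanti hBinv hx hy, form_bracket_cyclic hbrgr hBsym hBinv hx hy hz]
  by_cases habc : Even (a + b) ↔ Even c
  · have hsign : (-1 : ℂ) ^ (c + c * (a + b)) = 1 :=
      Even.neg_one_pow (by simp only [Nat.even_add, Nat.even_mul] at habc ⊢; tauto)
    rw [pow_add] at hsign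
    linear_combination (-1 : ℂ) ^ (a * b) * B x (br y z) * hsign
  · rw [form_bracket_eq_zero_of_parity_ne hbrgr hBsym hBeven hBinv hx hy hz habc]
    ring

variable {ι : Type} [DecidableEq ι] {X X' : ι → p} {d : ι → ℕ}
  (hXhom : ∀ i, Hm p0 p1 (d i) (X i)) (hX'hom : ∀ i, Hm p0 p1 (d i) (X' i))
  (hdual : ∀ i j, B (X' i) (X j) = if i = j then 1 else 0)

include hBsym hXhom hX'hom hdual in
theorem form_apply_dual_swap (i j : ι) :
    B (X i) (X' j) = if i = j then (-1 : ℂ) ^ d i else 0 := by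
  rw [hBsym (d i) (d j) (X i) (X' j) (hXhom i) (hX'hom j), hdual]
  by_cases hij : i = j
  · subst hij
    simpa using neg_one_pow_congr (by simp [Nat.even_mul])
  · simp [hij, Ne.symm hij]

include hBsym hXhom hX'hom hdual in
theorem dualCoord_apply_sumElim (hXX : ∀ i j, B (X i) (X j) = 0)
    (hX'X' : ∀ i j, B (X' i) (X' j) = 0) (k l : ι ⊕ ι) :
    dualCoord B X X' d k (Sum.elim X X' l) = if k = l then 1 else 0 := by
  rcases k with i | i <;> rcases l with j | j <;>
    simp [hdual, hXX, hX'X', form_apply_dual_swap hBsym hXhom hX'hom hdual, ← pow_add]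

end SuperForm

theorem manin_triple_CYBE_general
    {p : Type} [AddCommGroup p] [Module ℂ p]
    (p0 p1 : Submodule ℂ p)
    (br : p →ₗ[ℂ] p →ₗ[ℂ] p) (B : p →ₗ[ℂ] p →ₗ[ℂ] ℂ)
    (hbrgr : ∀ (a b : ℕ) (x y : p), Hm p0 p1 a x → Hm p0 p1 b y → Hm p0 p1 (a + b) (br x y))
    (hanti : ∀ (a b : ℕ) (x y : p), Hm p0 p1 a x → Hm p0 p1 b y →
      br x y = -(((-1 : ℂ) ^ (a * b)) • br y x))
    (hBsym : ∀ (a b : ℕ) (x y : p), Hm p0 p1 a x → Hm p0 p1 b y →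
      B x y = ((-1 : ℂ) ^ (a * b)) * B y x)
    (hBeven : ∀ x ∈ p0, ∀ y ∈ p1, B x y = 0)
    (hBinv : ∀ x y z : p, B (br x y) z = B x (br y z))
    (q1 q2 : Submodule ℂ p)
    (hq1br : ∀ x ∈ q1, ∀ y ∈ q1, br x y ∈ q1)
    (hq2br : ∀ x ∈ q2, ∀ y ∈ q2, br x y ∈ q2)
    (hq1iso : ∀ x ∈ q1, ∀ y ∈ q1, B x y = 0)
    (hq2iso : ∀ x ∈ q2, ∀ y ∈ q2, B x y = 0)
    (hcompl : IsCompl q1 q2)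
    (ι : Type) [Fintype ι] [DecidableEq ι] (X X' : ι → p) (d : ι → ℕ)
    (hX1 : ∀ i, X i ∈ q1) (hX2 : ∀ i, X' i ∈ q2)
    (hXhom : ∀ i, Hm p0 p1 (d i) (X i)) (hX'hom : ∀ i, Hm p0 p1 (d i) (X' i))
    (hspan1 : Submodule.span ℂ (Set.range X) = q1)
    (hspan2 : Submodule.span ℂ (Set.range X') = q2)
    (hdual : ∀ i j, B (X' i) (X j) = if i = j then 1 else 0) :
    (∑ i : ι, ∑ j : ι,
      (((-1 : ℂ) ^ (d i * d j)) • (br (X i) (X j) ⊗ₜ[ℂ] (X' i ⊗ₜ[ℂ] X' j))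
        + X i ⊗ₜ[ℂ] (br (X' i) (X j) ⊗ₜ[ℂ] X' j)
        + ((-1 : ℂ) ^ (d i * d j)) • (X i ⊗ₜ[ℂ] (X j ⊗ₜ[ℂ] br (X' i) (X' j)))))
      = (0 : p ⊗[ℂ] (p ⊗[ℂ] p)) := by
  have hXX : ∀ i j, B (X i) (X j) = 0 := fun i j => hq1iso _ (hX1 i) _ (hX1 j)
  have hX'X' : ∀ i j, B (X' i) (X' j) = 0 := fun i j => hq2iso _ (hX2 i) _ (hX2 j)
  have hXbr : ∀ k i j, B (X k) (br (X i) (X j)) = 0 :=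
    fun k i j => hq1iso _ (hX1 k) _ (hq1br _ (hX1 i) _ (hX1 j))
  have hX'br : ∀ k i j, B (X' k) (br (X' i) (X' j)) = 0 :=
    fun k i j => hq2iso _ (hX2 k) _ (hq2br _ (hX2 i) _ (hX2 j))
  have hspan : Submodule.span ℂ (Set.range (Sum.elim X X')) = ⊤ := by
    rw [Set.Sum.elim_range, Submodule.span_union, hspan1, hspan2, hcompl.sup_eq_top]
  set e := (Module.DualBases.of_span_eq_top
    (dualCoord_apply_sumElim hBsym hXhom hX'hom hdual hXX hX'X') hspan).basis
  refine (e.tensorProduct (e.tensorProduct e)).repr.injective ?_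
  ext ⟨k, l, m⟩
  simp only [map_sum, map_add, map_smul, map_zero, Finsupp.coe_finsetSum, Finset.sum_apply,
    Finsupp.add_apply, Finsupp.smul_apply, Finsupp.coe_zero, Pi.zero_apply, smul_eq_mul,
    Module.Basis.tensorProduct_repr_tmul_apply, e, Module.DualBases.basis_repr_apply,
    Module.DualBases.coeffs_apply]
  rcases k with a | a <;> rcases l with b | b <;> rcases m with c | c <;>
    simp only [dualCoord_inl, dualCoord_inr, hdual, hXX, hX'X', hXbr, hX'br,
      form_apply_dual_swap hBsym hXhom hX'hom hdual, mul_ite, ite_mul, ← pow_add, Even.add_self,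
      Even.neg_pow, one_pow, mul_zero, zero_mul, mul_one, one_mul, zero_add, add_zero, ite_self,
      Finset.sum_add_distrib, Finset.sum_ite_irrel, Finset.sum_ite_eq, Finset.mem_univ,
      if_true, Finset.sum_const_zero]
  case inl.inl.inr a b c =>
    linear_combination form_bracket_swap_add_cyclic_eq_zero hbrgr hanti hBsym hBeven hBinv
      (hX'hom a) (hX'hom b) (hXhom c)
  case inl.inr.inr a b c =>
    linear_combination form_bracket_add_swap_eq_zero hbrgr hanti hBsym hBeven hBinv
      (hX'hom a) (hXhom b) (hXhom c)

/-- for a Manin supertriple (p, p₁, p₂) with dual homogeneous bases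
{Xᵢ} of p₁ and {X'ᵢ} of p₂, the element s = Σᵢ Xᵢ ⊗ X'ᵢ satisfies the classical
Yang–Baxter equation [s₁₂,s₁₃] + [s₁₂,s₂₃] + [s₁₃,s₂₃] = 0, written out in p ⊗ p ⊗ p
with the Koszul signs of the graded tensor product. -/
theorem manin_triple_CYBE
    {p : Type} [AddCommGroup p] [Module ℂ p] [FiniteDimensional ℂ p]
    (p0 p1 : Submodule ℂ p) (hgrading : IsCompl p0 p1)
    (br : p →ₗ[ℂ] p →ₗ[ℂ] p) (B : p →ₗ[ℂ] p →ₗ[ℂ] ℂ)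
    (hbrgr : ∀ (a b : ℕ) (x y : p), Hm p0 p1 a x → Hm p0 p1 b y → Hm p0 p1 (a + b) (br x y))
    (hanti : ∀ (a b : ℕ) (x y : p), Hm p0 p1 a x → Hm p0 p1 b y →
      br x y = -(((-1 : ℂ) ^ (a * b)) • br y x))
    (hjacobi : ∀ (a b : ℕ) (x y z : p), Hm p0 p1 a x → Hm p0 p1 b y →
      br x (br y z) = br (br x y) z + ((-1 : ℂ) ^ (a * b)) • br y (br x z))
    (hBsym : ∀ (a b : ℕ) (x y : p), Hm p0 p1 a x → Hm p0 p1 b y →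
      B x y = ((-1 : ℂ) ^ (a * b)) * B y x)
    (hBeven : ∀ x ∈ p0, ∀ y ∈ p1, B x y = 0)
    (hBinv : ∀ x y z : p, B (br x y) z = B x (br y z))
    (hBnondeg : ∀ x : p, (∀ y : p, B x y = 0) → x = 0)
    (q1 q2 : Submodule ℂ p)
    (hq1br : ∀ x ∈ q1, ∀ y ∈ q1, br x y ∈ q1)
    (hq2br : ∀ x ∈ q2, ∀ y ∈ q2, br x y ∈ q2)
    (hq1iso : ∀ x ∈ q1, ∀ y ∈ q1, B x y = 0)
    (hq2iso : ∀ x ∈ q2, ∀ y ∈ q2, B x y = 0)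
    (hcompl : IsCompl q1 q2)
    (ι : Type) [Fintype ι] [DecidableEq ι] (X X' : ι → p) (d : ι → ℕ)
    (hX1 : ∀ i, X i ∈ q1) (hX2 : ∀ i, X' i ∈ q2)
    (hXhom : ∀ i, Hm p0 p1 (d i) (X i)) (hX'hom : ∀ i, Hm p0 p1 (d i) (X' i))
    (hspan1 : Submodule.span ℂ (Set.range X) = q1)
    (hspan2 : Submodule.span ℂ (Set.range X') = q2)
    (hdual : ∀ i j, B (X' i) (X j) = if i = j then 1 else 0) :
    (∑ i : ι, ∑ j : ι,
      (((-1 : ℂ) ^ (d i * d j)) • (br (X i) (X j) ⊗ₜ[ℂ] (X' i ⊗ₜ[ℂ] X' j))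
        + X i ⊗ₜ[ℂ] (br (X' i) (X j) ⊗ₜ[ℂ] X' j)
        + ((-1 : ℂ) ^ (d i * d j)) • (X i ⊗ₜ[ℂ] (X j ⊗ₜ[ℂ] br (X' i) (X' j)))))
      = (0 : p ⊗[ℂ] (p ⊗[ℂ] p)) :=
  manin_triple_CYBE_general p0 p1 br B hbrgr hanti hBsym hBeven hBinv q1 q2 hq1br hq2br hq1iso
    hq2iso hcompl ι X X' d hX1 hX2 hXhom hX'hom hspan1 hspan2 hdual
end
end

section
/- On (C(q)^{(n|n)})^{⊗3}, the operators c_i (i = 1, 2), obtained by applying c = Σ_{a,b}(−1)^{p(a)p(b)}E_ab⊗E_{−a,−b} to the i-th and (i+1)-th tensor factors, satisfy the relations c_2 c_1 c_2 = −c_2 and c_1 c_2 c_1 = −c_1. -/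
open Matrix BigOperators

variable (R : Type) [CommRing R] {n : ℕ}

noncomputable section

set_option synthInstance.maxHeartbeats 1000000
set_option maxHeartbeats 2000000

/-- the field ℂ(q) -/
abbrev Kq := RatFunc ℂ

/-- the variable q ∈ ℂ(q) -/
def qv : Kq := RatFunc.X

/-- the R-matrix S of type P over ℂ(q) -/
def SEl (n : ℕ) : M2 Kq n :=
  1
  + (∑ k : Fin n, kron2 Kq
      ((qv - 1) • E Kq (ppos k) (ppos k) + (qv⁻¹ - 1) • E Kq (nneg k) (nneg k))
      (E Kq (ppos k) (ppos k) + E Kq (nneg k) (nneg k)))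
  + ((qv - qv⁻¹) / 2) • (∑ k : Fin n, kron2 Kq (Em Kq (nneg k) (ppos k)) (E Kq (ppos k) (nneg k)))
  + (qv - qv⁻¹) • (∑ i : Idx n, ∑ j : Idx n,
      if ab j < ab i then ((-1 : Kq) ^ (par j)) • kron2 Kq (Em Kq i j) (E Kq j i) else 0)

/-- the contraction operator c = Σ_{a,b} (−1)^{p(a)p(b)} E_ab ⊗ E_{−a,−b} -/
def cOp (n : ℕ) : M2 Kq n :=
  ∑ a : Idx n, ∑ b : Idx n,
    ((-1 : Kq) ^ (par a * par b)) • kron2 Kq (E Kq a b) (E Kq (ng a) (ng b))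

/-- the super-permutation operator P = Σ_{a,b} (−1)^{p(b)} E_ab ⊗ E_ba -/
def POp (n : ℕ) : M2 Kq n :=
  ∑ a : Idx n, ∑ b : Idx n, ((-1 : Kq) ^ (par b)) • kron2 Kq (E Kq a b) (E Kq b a)

/-!
In coordinates `c (e_a ⊗ e_b) = δ_{b,−a} (−1)^{p(a)} Σ_d e_d ⊗ e_{−d}`, so `c` is a "cup" times a
signed "cap". In `c₂ c₁ c₂` the two inner contractions fix every intermediate index, and what
remains is `c₂` times the sign `(−1)^{p(−a)} (−1)^{p(a)} = −1`. Reversing the order of the three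
tensor factors sends `c₁` to `−c₂` and `c₂` to `−c₁`, so the second relation is the image of the
first.
-/

section

variable {n : ℕ}

@[simp] lemma ng_ng (i : Idx n) : ng (ng i) = i := by cases i <;> rfl

lemma ng_eq_iff {i j : Idx n} : ng i = j ↔ i = ng j := by
  constructor <;> rintro rfl <;> simp

lemma eq_ng_comm {i j : Idx n} : i = ng j ↔ j = ng i := by
  constructor <;> rintro rfl <;> simp

lemma par_ng_add_par (i : Idx n) : par (ng i) + par i = 1 := by cases i <;> rfl

lemma neg_one_pow_par_ng {R : Type*} [Ring R] (i : Idx n) :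
    (-1 : R) ^ par (ng i) = -(-1) ^ par i := by
  cases i <;> simp [par, ng]

lemma neg_one_pow_par_ng_mul {R : Type*} [Ring R] (i : Idx n) :
    (-1 : R) ^ par (ng i) * (-1) ^ par i = -1 := by
  rw [← pow_add, par_ng_add_par, pow_one]

lemma cOp_apply (x1 x2 y1 y2 : Idx n) :
    cOp n (x1, x2) (y1, y2) = if x2 = ng x1 ∧ y2 = ng y1 then (-1 : Kq) ^ par y1 else 0 := by
  simp only [cOp, Matrix.sum_apply, Matrix.smul_apply, kron2, E, Matrix.single_apply, smul_eq_mul]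
  rw [Fintype.sum_eq_single x1 (fun a ha => by simp [ha]),
    Fintype.sum_eq_single y1 (fun b hb => by simp [hb])]
  by_cases h : x2 = ng x1 ∧ y2 = ng y1
  · obtain ⟨rfl, rfl⟩ := h
    cases x1 <;> cases y1 <;> simp [par, ng]
  · have h' : ¬(ng x1 = x2 ∧ ng y1 = y2) := fun ⟨h1, h2⟩ => h ⟨h1.symm, h2.symm⟩
    simp [h, h']

lemma lift12_cOp_apply (x1 x2 x3 y1 y2 y3 : Idx n) :
    lift12 Kq (cOp n) (x1, x2, x3) (y1, y2, y3) =
      if x3 = y3 ∧ x2 = ng x1 ∧ y2 = ng y1 then (-1 : Kq) ^ par y1 else 0 := by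
  simp only [lift12, cOp_apply, ← ite_and]

lemma lift23_cOp_apply (x1 x2 x3 y1 y2 y3 : Idx n) :
    lift23 Kq (cOp n) (x1, x2, x3) (y1, y2, y3) =
      if x1 = y1 ∧ x3 = ng x2 ∧ y3 = ng y2 then (-1 : Kq) ^ par y2 else 0 := by
  simp only [lift23, cOp_apply, mul_ite, mul_zero, ← ite_and]
  split_ifs with h
  · obtain ⟨-, rfl, rfl⟩ := h
    -- `c` is even, so the Koszul sign is trivial.
    rw [Even.neg_one_pow, one_mul]
    apply Even.mul_right
    have := par_ng_add_par x2
    have := par_ng_add_par y2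
    exact ⟨1, by omega⟩
  · rfl

lemma lift23_mul_lift12_cOp_apply (x1 x2 x3 z1 z2 z3 : Idx n) :
    (lift23 Kq (cOp n) * lift12 Kq (cOp n)) (x1, x2, x3) (z1, z2, z3) =
      if z2 = ng z1 ∧ x3 = ng x2 ∧ z3 = x1 then (-1 : Kq) ^ par (ng x1) * (-1) ^ par z1 else 0 := by
  simp only [Matrix.mul_apply, Fintype.sum_prod_type, lift12_cOp_apply, lift23_cOp_apply]
  simp [ite_and, -Fintype.sum_sum_type]

lemma lift23_mul_lift12_mul_lift23_cOp :
    lift23 Kq (cOp n) * lift12 Kq (cOp n) * lift23 Kq (cOp n) = -lift23 Kq (cOp n) := by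
  ext ⟨x1, x2, x3⟩ ⟨y1, y2, y3⟩
  rw [Matrix.mul_apply]
  simp only [Fintype.sum_prod_type, lift23_mul_lift12_cOp_apply, lift23_cOp_apply,
    Matrix.neg_apply]
  simp [ite_and, ng_eq_iff, -Fintype.sum_sum_type]
  split_ifs <;> subst_vars <;> simp_all [neg_one_pow_par_ng_mul]

def tripleReverse (α : Type*) : α × α × α ≃ α × α × α where
  toFun x := (x.2.2, x.2.1, x.1)
  invFun x := (x.2.2, x.2.1, x.1)

lemma reindex_tripleReverse_lift12_cOp :
    reindex (tripleReverse (Idx n)) (tripleReverse (Idx n)) (lift12 Kq (cOp n)) =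
      -lift23 Kq (cOp n) := by
  ext ⟨x1, x2, x3⟩ ⟨y1, y2, y3⟩
  simp only [reindex_apply, submatrix_apply, tripleReverse, Equiv.coe_fn_symm_mk,
    lift12_cOp_apply, lift23_cOp_apply, Matrix.neg_apply, eq_ng_comm (i := x2),
    eq_ng_comm (i := y2)]
  split_ifs with h
  · rw [h.2.2, neg_one_pow_par_ng]
  · rw [neg_zero]

lemma reindex_tripleReverse_lift23_cOp :
    reindex (tripleReverse (Idx n)) (tripleReverse (Idx n)) (lift23 Kq (cOp n)) =
      -lift12 Kq (cOp n) := by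
  rw [← neg_neg (lift23 Kq (cOp n)), ← reindex_tripleReverse_lift12_cOp]
  ext
  simp [tripleReverse]

end

theorem mul_mul_eq_neg_of_ringEquiv {A : Type*} [Ring A] (φ : A ≃+* A) {a b : A}
    (ha : φ a = -b) (hb : φ b = -a) (h : b * a * b = -b) : a * b * a = -a :=
  φ.injective <| by rw [map_mul, map_mul, ha, hb, map_neg, ha, neg_mul_neg, mul_neg, h]

/-- c₂c₁c₂ = −c₂ and c₁c₂c₁ = −c₁ on the super tensor cube. -/
theorem c_braid_relations (n : ℕ) :
    lift23 Kq (cOp n) * lift12 Kq (cOp n) * lift23 Kq (cOp n) = -lift23 Kq (cOp n) ∧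
    lift12 Kq (cOp n) * lift23 Kq (cOp n) * lift12 Kq (cOp n) = -lift12 Kq (cOp n) :=
  ⟨lift23_mul_lift12_mul_lift23_cOp,
    mul_mul_eq_neg_of_ringEquiv (reindexRingEquiv Kq (tripleReverse (Idx n)))
      reindex_tripleReverse_lift12_cOp reindex_tripleReverse_lift23_cOp
      lift23_mul_lift12_mul_lift23_cOp⟩
end
end
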